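/- Let G be an abelian topological group, H a closed subgroup of G such that the quotient group G/H is a torsion group of bounded order (there is k ∈ ℕ with k•t ∈ H for all t ∈ G), X a Hausdorff locally convex topological vector space over ℂ, and n ∈ ℕ. If P^n(H) is finite dimensional, then the restriction map r : P^n(G,X) → P^n(H,X), r(p) = p|_H, is a linear isomorphism (a linear bijection). -/

import Mathlib

open scoped BigOperators

/-- Forward difference operator: `delta h f t = f (t + h) - f t`. -/
def delta {J X : Type*} [Add J] [Sub X] (h : J) (f : J → X) : J → X :=
  fun t => f (t + h) - f t

/-- `f : J → X` is a (continuous) polynomial of degree at most `n`,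
i.e. `f ∈ P^n(J, X)`. -/
def IsPolyDeg {J X : Type*} [Add J] [Sub X] [Zero X] [TopologicalSpace J] [TopologicalSpace X]
    (n : ℕ) (f : J → X) : Prop :=
  Continuous f ∧ ∀ h : J, (delta h)^[n + 1] f = 0

theorem delta_add {J X : Type*} [Add J] [AddCommGroup X] (h : J) (f g : J → X) :
    delta h (f + g) = delta h f + delta h g := by
  funext t
  simp only [delta, Pi.add_apply]
  abel

theorem delta_smul {J X : Type*} [Add J] [AddCommGroup X] [Module ℂ X]
    (h : J) (c : ℂ) (f : J → X) :
    delta h (c • f) = c • delta h f := by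
  funext t
  simp only [delta, Pi.smul_apply, smul_sub]

theorem delta_zero {J X : Type*} [Add J] [AddCommGroup X] (h : J) :
    delta h (0 : J → X) = 0 := by
  funext t
  simp [delta]

theorem delta_iter_add {J X : Type*} [Add J] [AddCommGroup X] (h : J) (k : ℕ) (f g : J → X) :
    (delta h)^[k] (f + g) = (delta h)^[k] f + (delta h)^[k] g := by
  induction k generalizing f g with
  | zero => rfl
  | succ k ih =>
    rw [Function.iterate_succ_apply, Function.iterate_succ_apply, Function.iterate_succ_apply,
      delta_add, ih]

theorem delta_iter_smul {J X : Type*} [Add J] [AddCommGroup X] [Module ℂ X]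
    (h : J) (k : ℕ) (c : ℂ) (f : J → X) :
    (delta h)^[k] (c • f) = c • (delta h)^[k] f := by
  induction k generalizing f with
  | zero => rfl
  | succ k ih =>
    rw [Function.iterate_succ_apply, Function.iterate_succ_apply, delta_smul, ih]

theorem delta_iter_zero {J X : Type*} [Add J] [AddCommGroup X] (h : J) (k : ℕ) :
    (delta h)^[k] (0 : J → X) = 0 :=
  Function.iterate_fixed (delta_zero h) k

/-- The space `P^n(J, X)` of polynomials of degree at most `n`, as a `ℂ`-submodule of the
space of all functions `J → X`. -/
def polySpace (J X : Type*) [Add J] [TopologicalSpace J] [AddCommGroup X] [Module ℂ X]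
    [TopologicalSpace X] [IsTopologicalAddGroup X] [ContinuousSMul ℂ X] (n : ℕ) :
    Submodule ℂ (J → X) where
  carrier := {p | IsPolyDeg n p}
  zero_mem' := ⟨continuous_zero, fun h => delta_iter_zero h (n + 1)⟩
  add_mem' := by
    rintro f g ⟨hfc, hfd⟩ ⟨hgc, hgd⟩
    exact ⟨hfc.add hgc, fun h => by rw [delta_iter_add, hfd h, hgd h, add_zero]⟩
  smul_mem' := by
    rintro c f ⟨hfc, hfd⟩
    exact ⟨hfc.const_smul c, fun h => by rw [delta_iter_smul, hfd h, smul_zero]⟩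

/-! If `Δ_[t]^[n+1] p = 0`, the Gregory–Newton formula makes `m ↦ p (m • t)` a polynomial of
degree `≤ n` in `m` with coefficients in `X`, so Lagrange interpolation at the nodes
`0, k, …, n * k` gives `p t = ∑ c, λ c • p ((k * c) • t)` with weights `λ c` depending only on
`n` and `k`. All the points `(k * c) • t` lie in `H`, so a polynomial on `G` is determined by its
restriction to `H`; conversely, for a polynomial `f` on `H`, the same formula
`t ↦ ∑ c, λ c • f ((k * c) • t)` is a polynomial on `G` (each `t ↦ (k * c) • t` is a continuous
homomorphism `G →+ H`), and it restricts to `f` by the interpolation identity for `f` itself. -/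

open Finset Polynomial fwdDiff

theorem delta_eq_fwdDiff {J X : Type*} [AddCommMonoid J] [AddCommGroup X] (h : J) :
    (delta h : (J → X) → J → X) = Δ_[h] :=
  rfl

theorem Lagrange.eval_eq_sum_eval_mul_eval_basis {F ι : Type*} [Field F] [DecidableEq ι]
    {s : Finset ι} {v : ι → F} {f : F[X]} (hvs : Set.InjOn v s) (hf : f.degree < #s) (x : F) :
    f.eval x = ∑ i ∈ s, f.eval (v i) * (Lagrange.basis s v i).eval x := by
  conv_lhs => rw [Lagrange.eq_interpolate hvs hf]
  simp only [Lagrange.interpolate_apply, eval_finsetSum, eval_mul, eval_C]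

theorem Nat.cast_choose_eq_sum_mul_eval_lagrangeBasis {K ι : Type*} [Field K] [CharZero K]
    [DecidableEq ι] {s : Finset ι} {v : ι → ℕ} (hv : Set.InjOn v s) {j : ℕ} (hj : j < #s)
    (m : ℕ) :
    (m.choose j : K) =
      ∑ i ∈ s, ((v i).choose j : K) * (Lagrange.basis s (fun i ↦ (v i : K)) i).eval (m : K) := by
  have hdeg : (descPochhammer K j).degree < #s := by
    rw [degree_eq_natDegree (monic_descPochhammer K j).ne_zero, descPochhammer_natDegree]
    exact_mod_cast hj
  rw [Nat.cast_choose_eq_descPochhammer_div,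
    Lagrange.eval_eq_sum_eval_mul_eval_basis (Nat.cast_injective.comp_injOn hv) hdeg, sum_div]
  refine sum_congr rfl fun i _ ↦ ?_
  rw [Nat.cast_choose_eq_descPochhammer_div, div_mul_eq_mul_div]
  rfl

theorem fwdDiff_iter_eq_zero_of_le {M G : Type*} [AddCommMonoid M] [AddCommGroup G] {h : M}
    {f : M → G} {n j : ℕ} (hf : Δ_[h] ^[n] f = 0) (hj : n ≤ j) : Δ_[h] ^[j] f = 0 := by
  obtain ⟨i, rfl⟩ := Nat.exists_eq_add_of_le hj
  rw [add_comm, Function.iterate_add_apply, hf]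
  exact Function.iterate_fixed (fwdDiff_const h (0 : G)) i

theorem eq_sum_range_choose_smul_fwdDiff_iter {G : Type*} [AddCommGroup G] {a : ℕ → G} {n : ℕ}
    (ha : Δ_[1] ^[n + 1] a = 0) (m : ℕ) :
    a m = ∑ j ∈ range (n + 1), m.choose j • Δ_[1] ^[j] a 0 := by
  have hzero : ∀ j, m < j ∨ n < j → m.choose j • Δ_[1] ^[j] a 0 = 0 := by
    rintro j (hj | hj)
    · rw [Nat.choose_eq_zero_of_lt hj, zero_smul]
    · rw [fwdDiff_iter_eq_zero_of_le ha hj, Pi.zero_apply, smul_zero]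
  calc a m = ∑ j ∈ range (m + 1), m.choose j • Δ_[1] ^[j] a 0 := by
        simpa using shift_eq_sum_fwdDiff_iter 1 a m 0
    _ = ∑ j ∈ range (m + n + 1), m.choose j • Δ_[1] ^[j] a 0 :=
        sum_subset (range_subset_range.2 (by omega)) fun j _ hj ↦
          hzero j (.inl (by simpa using hj))
    _ = ∑ j ∈ range (n + 1), m.choose j • Δ_[1] ^[j] a 0 :=
        (sum_subset (range_subset_range.2 (by omega)) fun j _ hj ↦
          hzero j (.inr (by simpa using hj))).symm

theorem eq_sum_eval_lagrangeBasis_smul_of_fwdDiff_iter_eq_zero {K X ι : Type*} [Field K]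
    [CharZero K] [AddCommGroup X] [Module K X] [DecidableEq ι] {n : ℕ} {a : ℕ → X}
    (ha : Δ_[1] ^[n + 1] a = 0) {s : Finset ι} (hs : #s = n + 1) {v : ι → ℕ}
    (hv : Set.InjOn v s) (m : ℕ) :
    a m = ∑ i ∈ s, (Lagrange.basis s (fun i ↦ (v i : K)) i).eval (m : K) • a (v i) := by
  simp_rw [eq_sum_range_choose_smul_fwdDiff_iter ha, ← Nat.cast_smul_eq_nsmul K, smul_sum,
    smul_smul]
  rw [sum_comm]
  refine sum_congr rfl fun j hj ↦ ?_
  rw [← sum_smul, Nat.cast_choose_eq_sum_mul_eval_lagrangeBasis hv (hs ▸ mem_range.1 hj) m]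
  simp_rw [mul_comm]

theorem fwdDiff_iter_comp_addMonoidHom {M N G : Type*} [AddCommMonoid M] [AddCommMonoid N]
    [AddCommGroup G] (φ : M →+ N) (f : N → G) (h : M) (j : ℕ) :
    Δ_[h] ^[j] (f ∘ φ) = Δ_[φ h] ^[j] f ∘ φ := by
  ext y
  simp [fwdDiff_iter_eq_sum_shift]

theorem eq_sum_eval_lagrangeBasis_smul_nsmul {K M X ι : Type*} [Field K] [CharZero K]
    [AddCommMonoid M] [AddCommGroup X] [Module K X] [DecidableEq ι] {n : ℕ} {f : M → X} {t : M}
    (hf : Δ_[t] ^[n + 1] f = 0) {s : Finset ι} (hs : #s = n + 1) {v : ι → ℕ}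
    (hv : Set.InjOn v s) :
    f t = ∑ i ∈ s, (Lagrange.basis s (fun i ↦ (v i : K)) i).eval 1 • f (v i • t) := by
  have ha : Δ_[1] ^[n + 1] (f ∘ multiplesHom M t) = 0 := by
    rw [fwdDiff_iter_comp_addMonoidHom, multiplesHom_apply, one_nsmul, hf, Pi.zero_comp]
  simpa using eq_sum_eval_lagrangeBasis_smul_of_fwdDiff_iter_eq_zero (K := K) ha hs hv 1

theorem IsPolyDeg.comp_addMonoidHom {M N X : Type*} [AddCommMonoid M] [TopologicalSpace M]
    [AddCommMonoid N] [TopologicalSpace N] [AddCommGroup X] [TopologicalSpace X] {n : ℕ}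
    {f : N → X} (hf : IsPolyDeg n f) (φ : M →+ N) (hφ : Continuous φ) : IsPolyDeg n (f ∘ φ) :=
  ⟨hf.1.comp hφ, fun h ↦ by
    rw [delta_eq_fwdDiff, fwdDiff_iter_comp_addMonoidHom, ← delta_eq_fwdDiff, hf.2, Pi.zero_comp]⟩

section BoundedIndex

variable {G X S : Type*} [AddCommMonoid G] [SetLike S G] [AddSubmonoidClass S G] {H : S} {k : ℕ}

theorem mul_nsmul_mem_of_nsmul_mem (hkH : ∀ t : G, k • t ∈ H) (c : ℕ) (t : G) :
    (k * c) • t ∈ H := by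
  rw [mul_nsmul]
  exact nsmul_mem (hkH t) c

theorem eq_of_fwdDiff_iter_eq_zero_of_eqOn {K : Type*} [Field K] [CharZero K]
    [AddCommGroup X] [Module K X] (hk : 0 < k) (hkH : ∀ t : G, k • t ∈ H) {n : ℕ} {p q : G → X}
    (hp : ∀ t, Δ_[t] ^[n + 1] p = 0) (hq : ∀ t, Δ_[t] ^[n + 1] q = 0)
    (hpq : ∀ x ∈ H, p x = q x) : p = q := by
  have hinj : Set.InjOn (k * ·) (range (n + 1) : Set ℕ) := (mul_right_injective₀ hk.ne').injOn
  funext t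
  rw [eq_sum_eval_lagrangeBasis_smul_nsmul (K := K) (hp t) (card_range _) hinj,
    eq_sum_eval_lagrangeBasis_smul_nsmul (K := K) (hq t) (card_range _) hinj]
  refine sum_congr rfl fun c _ ↦ ?_
  rw [hpq _ (mul_nsmul_mem_of_nsmul_mem hkH c t)]

theorem exists_isPolyDeg_extension_of_nsmul_mem [TopologicalSpace G] [ContinuousAdd G]
    [AddCommGroup X] [Module ℂ X] [TopologicalSpace X] [IsTopologicalAddGroup X]
    [ContinuousSMul ℂ X] (hk : 0 < k) (hkH : ∀ t : G, k • t ∈ H) {n : ℕ} {f : H → X}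
    (hf : IsPolyDeg n f) : ∃ p : G → X, IsPolyDeg n p ∧ ∀ x : H, p x = f x := by
  have hmem := mul_nsmul_mem_of_nsmul_mem hkH
  let φ (c : ℕ) : G →+ H := (nsmulAddMonoidHom (k * c)).codRestrict H (hmem c)
  have hφ (c : ℕ) : Continuous (φ c) := (continuous_nsmul (k * c)).subtype_mk (hmem c)
  let w (c : ℕ) : ℂ := (Lagrange.basis (range (n + 1)) (fun c ↦ ((k * c : ℕ) : ℂ)) c).eval 1
  refine ⟨∑ c ∈ range (n + 1), w c • (f ∘ φ c),
    (polySpace G X n).sum_mem fun c _ ↦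
      (polySpace G X n).smul_mem _ (hf.comp_addMonoidHom _ (hφ c)),
    fun x ↦ ?_⟩
  have hφx (c : ℕ) : φ c x = (k * c) • x := rfl
  rw [eq_sum_eval_lagrangeBasis_smul_nsmul (K := ℂ) (hf.2 x) (card_range _)
    (mul_right_injective₀ hk.ne').injOn]
  simp only [Finset.sum_apply, Pi.smul_apply, Function.comp_apply, hφx, w]

end BoundedIndex

theorem restriction_to_bounded_order_quotient_subgroup_bijective_general
    {G X : Type*} [AddCommGroup G] [TopologicalSpace G] [IsTopologicalAddGroup G]
    [AddCommGroup X] [Module ℂ X] [TopologicalSpace X] [IsTopologicalAddGroup X]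
    [ContinuousSMul ℂ X]
    (H : AddSubgroup G)
    (k : ℕ) (hk : 0 < k) (hbdd : ∀ t : G, k • t ∈ H)
    (n : ℕ) :
    (∀ p q : G → X, IsPolyDeg n p → IsPolyDeg n q →
        (∀ x : H, p (x : G) = q (x : G)) → p = q) ∧
    (∀ f : H → X, IsPolyDeg n f →
        ∃ p : G → X, IsPolyDeg n p ∧ ∀ x : H, p (x : G) = f x) :=
  ⟨fun _ _ hp hq hpq ↦ eq_of_fwdDiff_iter_eq_zero_of_eqOn (K := ℂ) hk hbdd hp.2 hq.2
      fun x hx ↦ hpq ⟨x, hx⟩,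
    fun _ hf ↦ exists_isPolyDeg_extension_of_nsmul_mem hk hbdd hf⟩

/-- if `H` is a closed subgroup of an abelian topological group `G` with
`G/H` a torsion group of bounded order (`k • t ∈ H` for all `t ∈ G`, for some `k ≥ 1`),
`X` is a Hausdorff locally convex topological vector space over `ℂ`, and `P^n(H)` is
finite dimensional, then the restriction map `P^n(G, X) → P^n(H, X)` is a linear
isomorphism: it is injective and surjective. -/
theorem restriction_to_bounded_order_quotient_subgroup_bijective
    {G X : Type*} [AddCommGroup G] [TopologicalSpace G] [IsTopologicalAddGroup G]
    [AddCommGroup X] [Module ℂ X] [TopologicalSpace X] [IsTopologicalAddGroup X]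
    [ContinuousSMul ℂ X] [T2Space X]
    [Module ℝ X] [IsScalarTower ℝ ℂ X] [LocallyConvexSpace ℝ X]
    (H : AddSubgroup G) (hHclosed : IsClosed (H : Set G))
    (k : ℕ) (hk : 0 < k) (hbdd : ∀ t : G, k • t ∈ H)
    (n : ℕ) (hfd : FiniteDimensional ℂ (polySpace H ℂ n)) :
    (∀ p q : G → X, IsPolyDeg n p → IsPolyDeg n q →
        (∀ x : H, p (x : G) = q (x : G)) → p = q) ∧
    (∀ f : H → X, IsPolyDeg n f →
        ∃ p : G → X, IsPolyDeg n p ∧ ∀ x : H, p (x : G) = f x) :=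
  restriction_to_bounded_order_quotient_subgroup_bijective_general H k hk hbdd n
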